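/- Let p, q be coprime positive integers and b an integer, and let G(p,b,q) = ∑_{r=0}^{q-1} e^{2πi(p r² + b r)/q} be the generalized quadratic Gauss sum. If q is odd, then |G(p,b,q)| = √q. -/

import Mathlib

/-!
Expanding `|G|² = ∑_{x,y} ψ(f x - f y)` for `f x = p x² + b x` and substituting `x = y + t`,
the phase becomes `f t + y · 2pt`, which is linear in `y`. Summing over `y` by orthogonality of the
additive character kills every `t` with `2pt ≠ 0`; as `2p` is a unit modulo the odd `q`, only
`t = 0` survives, with weight `q`.
-/

open Complex

noncomputable def G (p : ℕ) (b : ℤ) (q : ℕ) : ℂ :=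
  ∑ r ∈ Finset.range q,
    Complex.exp (2 * Real.pi * Complex.I * ((p * r ^ 2 + b * r : ℂ) / q))

open Finset

namespace AddChar

variable {R K : Type*} [CommRing R] [Fintype R] [RCLike K] {ψ : AddChar R K}

theorem sq_norm_sum_quadratic (hψ : ψ.IsPrimitive) {a : R} (ha : IsUnit (2 * a)) (c : R) :
    ‖∑ x, ψ (a * x ^ 2 + c * x)‖ ^ 2 = Fintype.card R := by
  classical
  apply RCLike.ofReal_injective (K := K)
  push_cast
  set f : R → R := fun x ↦ a * x ^ 2 + c * x
  have hshift (y t : R) : f (y + t) - f y = f t + y * (2 * a * t) := by simp only [f]; ring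
  calc (‖∑ x, ψ (f x)‖ ^ 2 : K)
      = ∑ y, ∑ x, ψ (f x - f y) := by
        rw [← RCLike.mul_conj, map_sum, sum_mul_sum, sum_comm]
        simp only [← map_neg_eq_conj, ← map_add_eq_mul, sub_eq_add_neg]
    _ = ∑ y, ∑ t, ψ (f (y + t) - f y) := by
        refine sum_congr rfl fun y _ ↦ ?_
        exact (Fintype.sum_equiv (Equiv.addLeft y) _ _ fun _ ↦ rfl).symm
    _ = ∑ t, ψ (f t) * ∑ y, ψ (y * (2 * a * t)) := by
        rw [sum_comm]
        simp only [hshift, map_add_eq_mul, mul_sum]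
    _ = ∑ t, ψ (f t) * if t = 0 then (Fintype.card R : K) else 0 := by
        simp only [sum_mulShift _ hψ, ha.mul_right_eq_zero, Nat.cast_ite, Nat.cast_zero]
    _ = Fintype.card R := by simp [f]

end AddChar

theorem G_eq_sum_stdAddChar (p : ℕ) (b : ℤ) (q : ℕ) [NeZero q] :
    G p b q = ∑ x : ZMod q, ZMod.stdAddChar ((p : ZMod q) * x ^ 2 + (b : ZMod q) * x) := by
  refine sum_nbij' (fun r ↦ (r : ZMod q)) (fun x ↦ x.val)
    (fun r _ ↦ mem_univ _) (fun x _ ↦ mem_range.2 x.val_lt)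
    (fun r hr ↦ ZMod.val_cast_of_lt (mem_range.1 hr)) (fun x _ ↦ ZMod.natCast_zmod_val x)
    fun r _ ↦ ?_
  have hcast : (p : ZMod q) * (r : ZMod q) ^ 2 + (b : ZMod q) * r =
      ((p * r ^ 2 + b * r : ℤ) : ZMod q) := by
    push_cast; ring
  rw [hcast, ZMod.stdAddChar_coe]
  push_cast
  ring_nf

theorem abs_gauss_sum_odd_general (p q : ℕ) (b : ℤ)
    (hcop : Nat.Coprime p q) (hodd : Odd q) :
    ‖G p b q‖ = Real.sqrt q := by
  have : NeZero q := ⟨hodd.pos.ne'⟩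
  have h2p : IsUnit (2 * (p : ZMod q)) := by
    exact_mod_cast (ZMod.isUnit_iff_coprime (2 * p) q).2
      (Nat.Coprime.mul_left (Nat.coprime_two_left.2 hodd) hcop)
  have hsq := AddChar.sq_norm_sum_quadratic (ZMod.isPrimitive_stdAddChar q) h2p (b : ZMod q)
  rw [← G_eq_sum_stdAddChar, ZMod.card] at hsq
  rw [← Real.sqrt_sq (norm_nonneg _), hsq]

/-- If `p, q` are coprime positive integers and `q` is odd, then the generalized
quadratic Gauss sum `G(p,b,q)` has modulus `√q`. -/
theorem abs_gauss_sum_odd (p q : ℕ) (b : ℤ) (hp : 0 < p) (hq : 0 < q)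
    (hcop : Nat.Coprime p q) (hodd : Odd q) :
    ‖G p b q‖ = Real.sqrt q :=
  abs_gauss_sum_odd_general p q b hcop hodd
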